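/- Let b be a pre-blowup operator on S with multiplier m, and q, s ∈ S. Then: (1) if q 𝓛 s then qb 𝓛 sb; (2) if q ≤_𝓛 s then q ⊆ q m_{L_s}; (3) if q ≤_𝓛 s and s is an 𝐇-element then q = q m_{L_s}; (4) if qb 𝓡 q then qb = q; (5) if b is idempotent, the image of b equals the set of 𝐇-elements of S. -/

import Mathlib

open Pointwise

/-- A variety of finite groups: a class of finite groups closed under finite direct
products, subgroups and homomorphic images. -/
structure GroupVariety : Type 1 where
  mem : ∀ (G : Type) [Group G] [Finite G], Prop
  closed_prod : ∀ (G H : Type) [Group G] [Finite G] [Group H] [Finite H],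
    mem G → mem H → mem (G × H)
  closed_sub : ∀ (G : Type) [Group G] [Finite G] (K : Subgroup G), mem G → mem K
  closed_hom : ∀ (G H : Type) [Group G] [Finite G] [Group H] [Finite H] (f : G →* H),
    Function.Surjective f → mem G → mem H

/-- The 𝐇-kernel of a finite group: the smallest normal subgroup whose quotient
belongs to the class `P` of finite groups. -/
def HKer (P : ∀ (G : Type) [Group G] [Finite G], Prop) (G : Type) [Group G] [Finite G] :
    Subgroup G :=
  sInf {N : Subgroup G |
    ∃ h : N.Normal, @P (G ⧸ N) (@QuotientGroup.Quotient.group G _ N h) inferInstance}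

/-- Green's preorder `x ≤_𝓛 y`, i.e. `x ∈ S¹y`. -/
def leL {S : Type} [Semigroup S] (x y : S) : Prop := x = y ∨ ∃ a, x = a * y
/-- Green's preorder `x ≤_𝓡 y`, i.e. `x ∈ yS¹`. -/
def leR {S : Type} [Semigroup S] (x y : S) : Prop := x = y ∨ ∃ a, x = y * a
/-- Green's relation `𝓛`. -/
def eqL {S : Type} [Semigroup S] (x y : S) : Prop := leL x y ∧ leL y x
/-- Green's relation `𝓡`. -/
def eqR {S : Type} [Semigroup S] (x y : S) : Prop := leR x y ∧ leR y x
/-- Green's preorder `≤_𝓗`. -/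
def leH {S : Type} [Semigroup S] (x y : S) : Prop := leL x y ∧ leR x y
/-- Green's relation `𝓗`. -/
def eqH {S : Type} [Semigroup S] (x y : S) : Prop := eqL x y ∧ eqR x y
/-- The 𝓗-class of `x`. -/
def HClass {S : Type} [Semigroup S] (x : S) : Set S := {y | eqH y x}
/-- The 𝓛-class of `x`. -/
def LClass {S : Type} [Semigroup S] (x : S) : Set S := {y | eqL y x}

/-- The right stabilizer of a subset of `S`, as a submonoid of `S¹ = WithOne S`. -/
def stRsub {S : Type} [Semigroup S] (X : Set S) : Submonoid (WithOne S) where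
  carrier := {u | ∀ x ∈ X, ∃ y ∈ X, (↑x * u : WithOne S) = ↑y}
  one_mem' := fun x hx => ⟨x, hx, mul_one _⟩
  mul_mem' := by
    intro u v hu hv x hx
    obtain ⟨y, hy, hxy⟩ := hu x hx
    obtain ⟨z, hz, hyz⟩ := hv y hy
    exact ⟨z, hz, by rw [← mul_assoc, hxy, hyz]⟩

/-- Right multiplication by an element of `S¹ = WithOne S`, as a map `S → S`. -/
noncomputable def actW {S : Type} [Semigroup S] (q : S) (m : WithOne S) : S :=
  @dite _ (m = 1) (Classical.dec _) (fun _ => q) (fun h => q * WithOne.unone h)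

/-- `s` is an 𝐇-element: the right Schützenberger group of its 𝓗-class lies in `V`;
equivalently, there is a group `G` in `V` and a surjection from the right stabilizer of
`H_s` onto `G` whose kernel is exactly the kernel of the action on `H_s`. -/
def IsHElement (V : GroupVariety) {S : Type} [Semigroup S] (s : S) : Prop :=
  ∃ (G : Type) (iG : Group G) (fG : Finite G), @GroupVariety.mem V G iG fG ∧
    ∃ f : ↥(stRsub (HClass s)) →* G, Function.Surjective f ∧
      ∀ u v : ↥(stRsub (HClass s)),
        f u = f v ↔ ∀ x ∈ HClass s, ((↑x : WithOne S) * ↑u) = ↑x * ↑v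

/-- A subset of `2^T` is H̄-saturated: a subsemigroup, downward closed, and closed
under taking unions of 𝐇-kernels of its subgroups. -/
def Saturated (V : GroupVariety) (T : Type) [Semigroup T] (A : Set (Set T)) : Prop :=
  (∀ X ∈ A, ∀ Y ∈ A, X * Y ∈ A) ∧
  (∀ X ∈ A, ∀ Y : Set T, Y ⊆ X → Y ∈ A) ∧
  (∀ (G : Type) (iG : Group G) (fG : Finite G) (ι : @MulHom G (Set T) _ _),
      Function.Injective ι → (∀ g : G, ι g ∈ A) →
      (⋃ g ∈ (@HKer V.mem G iG fG : Subgroup G), ι g) ∈ A)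

/-- The H̄-saturation of the set of singletons in `2^T`. -/
def SatSet (V : GroupVariety) (T : Type) [Semigroup T] [Finite T] : Set (Set T) :=
  ⋂₀ {A | Saturated V T A ∧ ∀ t : T, {t} ∈ A}

/-- The H̄-saturation `S = Sat_H̄(Tη)` of the singletons, as a subsemigroup of `2^T`. -/
def SatSub (V : GroupVariety) (T : Type) [Semigroup T] [Finite T] : Subsemigroup (Set T) where
  carrier := SatSet V T
  mul_mem' := by
    intro a b ha hb
    rw [SatSet, Set.mem_sInter] at *
    exact fun A hA => hA.1.1 a (ha A hA) b (hb A hA)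

/-- A pre-blowup operator on `S = Sat_H̄(Tη)`: (i) on each 𝓛-class it is given by right
multiplication by some `m_L ∈ S¹`; (ii) it fixes the 𝐇-elements and moves every other
element strictly 𝓗-downward; (iii) it enlarges each element (as a subset of `T`). -/
def IsPreBlowup (V : GroupVariety) (T : Type) [Semigroup T] [Finite T]
    (b : ↥(SatSub V T) → ↥(SatSub V T)) : Prop :=
  (∀ s : ↥(SatSub V T), ∃ m : WithOne ↥(SatSub V T), ∀ s', eqL s' s → b s' = actW s' m) ∧
  (∀ s : ↥(SatSub V T), IsHElement V s → b s = s) ∧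
  (∀ s : ↥(SatSub V T), ¬ IsHElement V s → leH (b s) s ∧ ¬ eqH (b s) s) ∧
  (∀ s : ↥(SatSub V T), (↑s : Set T) ⊆ (↑(b s) : Set T))

/-- A multiplier for an operator `b`: a function constant on 𝓛-classes such that
`b s = s · m_{L_s}` for all `s`. -/
def IsMultiplier {W : Type} [Semigroup W] (b : W → W) (m : W → WithOne W) : Prop :=
  (∀ q q', eqL q q' → m q = m q') ∧ ∀ s, b s = actW s (m s)

/-
Apart from (4) everything is formal: on an `𝓛`-class `b` is one right translation, `≤_𝓛` is
stable under right translation, and `S¹`-left multiples of `s` inherit `s ⊆ s m` and `s = s m`.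
(4) is stability of finite semigroups: `x ≤_𝓛 y` and `x 𝓡 y` force `x 𝓗 y`, whereas a
non-𝐇-element is moved strictly `𝓗`-downward. Stability comes from an idempotent: if
`y = a y v`, the elements `c ≤_𝓛 a` with `y ∈ c y S` form a finite subsemigroup, so one of them
is an idempotent `e`, and then `y = e y ≤_𝓛 a y`.
-/

section Green

variable {S : Type} [Semigroup S]

theorem leL_refl (x : S) : leL x x := Or.inl rfl

theorem eqH_refl (x : S) : eqH x x := ⟨⟨leL_refl x, leL_refl x⟩, Or.inl rfl, Or.inl rfl⟩

theorem leL_mul_left (c x : S) : leL (c * x) x := Or.inr ⟨c, rfl⟩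

theorem leL.trans {x y z : S} (hxy : leL x y) (hyz : leL y z) : leL x z := by
  rcases hxy with rfl | ⟨a, rfl⟩
  · exact hyz
  rcases hyz with rfl | ⟨c, rfl⟩
  · exact leL_mul_left a _
  · exact Or.inr ⟨a * c, (mul_assoc a c z).symm⟩

theorem leL.mul_right {x y : S} (h : leL x y) (u : S) : leL (x * u) (y * u) := by
  rcases h with rfl | ⟨a, rfl⟩
  · exact leL_refl _
  · exact Or.inr ⟨a, mul_assoc a y u⟩

theorem actW_one (q : S) : actW q 1 = q := dif_pos rfl

theorem actW_coe (q u : S) : actW q u = q * u := dif_neg WithOne.coe_ne_one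

theorem leL.actW_right {q s : S} (h : leL q s) (w : WithOne S) : leL (actW q w) (actW s w) := by
  cases w with
  | one => simpa only [actW_one] using h
  | coe u => simpa only [actW_coe] using h.mul_right u

theorem eqL.actW_right {q s : S} (h : eqL q s) (w : WithOne S) : eqL (actW q w) (actW s w) :=
  ⟨h.1.actW_right w, h.2.actW_right w⟩

theorem leL.actW_eq_self {q s : S} {w : WithOne S} (h : leL q s) (hs : actW s w = s) :
    actW q w = q := by
  cases w with
  | one => exact actW_one q
  | coe u =>
    rw [actW_coe] at hs ⊢
    rcases h with rfl | ⟨a, rfl⟩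
    · exact hs
    · rw [mul_assoc, hs]

theorem leL.coe_subset_coe_actW {T : Type} [Semigroup T] {R : Subsemigroup (Set T)}
    {q s : R} {w : WithOne R} (h : leL q s) (hs : (s : Set T) ⊆ (actW s w : R)) :
    (q : Set T) ⊆ (actW q w : R) := by
  cases w with
  | one => rw [actW_one]
  | coe u =>
    rw [actW_coe] at hs ⊢
    rcases h with rfl | ⟨a, rfl⟩
    · exact hs
    · rw [mul_assoc, MulMemClass.coe_mul, MulMemClass.coe_mul]
      exact Set.mul_subset_mul_left hs

theorem Finite.exists_mul_self_eq_of_mul_mem [Finite S] {s : Set S} (hne : s.Nonempty)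
    (hmul : ∀ x ∈ s, ∀ y ∈ s, x * y ∈ s) : ∃ e ∈ s, e * e = e := by
  let : TopologicalSpace S := ⊥
  have : DiscreteTopology S := ⟨rfl⟩
  exact exists_idempotent_in_compact_subsemigroup (fun _ => continuous_of_discreteTopology) s
    hne s.toFinite.isCompact hmul

theorem leL_of_leL_of_leR [Finite S] {x y : S} (hL : leL x y) (hR : leR y x) : leL y x := by
  rcases hL with rfl | ⟨a, rfl⟩
  · exact leL_refl x
  rcases hR with hR | ⟨v, hR⟩
  · exact hR ▸ leL_refl _
  let s : Set S := {c | leL c a ∧ ∃ w, y = c * y * w}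
  have hmul : ∀ c ∈ s, ∀ d ∈ s, c * d ∈ s := by
    rintro c ⟨-, w, hc⟩ d ⟨hd, w', hd'⟩
    refine ⟨(leL_mul_left c d).trans hd, w' * w, ?_⟩
    calc y = c * (d * y * w') * w := by rw [← hd', ← hc]
      _ = c * d * y * (w' * w) := by simp only [mul_assoc]
  obtain ⟨e, ⟨he, w, hy⟩, hee⟩ :=
    Finite.exists_mul_self_eq_of_mul_mem (s := s) ⟨a, leL_refl a, v, hR⟩ hmul
  have hey : y = e * y :=
    calc y = e * e * y * w := by rw [hee, ← hy]
      _ = e * (e * y * w) := by simp only [mul_assoc]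
      _ = e * y := by rw [← hy]
  simpa only [← hey] using he.mul_right y

theorem eqH_of_leL_of_eqR [Finite S] {x y : S} (hL : leL x y) (hR : eqR x y) : eqH x y :=
  ⟨⟨hL, leL_of_leL_of_leR hL hR.2⟩, hR⟩

end Green

/-- Properties of a pre-blowup operator `b` with multiplier `m`. -/
theorem preblowup_properties (V : GroupVariety) (T : Type) [Semigroup T] [Finite T]
    (b : ↥(SatSub V T) → ↥(SatSub V T)) (m : ↥(SatSub V T) → WithOne ↥(SatSub V T))
    (hb : IsPreBlowup V T b) (hm : IsMultiplier b m) :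
    (∀ q s : ↥(SatSub V T), eqL q s → eqL (b q) (b s)) ∧
    (∀ q s : ↥(SatSub V T), leL q s → (↑q : Set T) ⊆ (↑(actW q (m s)) : Set T)) ∧
    (∀ q s : ↥(SatSub V T), leL q s → IsHElement V s → q = actW q (m s)) ∧
    (∀ q : ↥(SatSub V T), eqR (b q) q → b q = q) ∧
    ((∀ q, b (b q) = b q) → Set.range b = {s : ↥(SatSub V T) | IsHElement V s}) := by
  obtain ⟨-, hfix, hdown, hgrow⟩ := hb
  obtain ⟨hmL, hbm⟩ := hm
  refine ⟨fun q s hqs => ?_, fun q s hqs => ?_, fun q s hqs hs => ?_, fun q hR => ?_,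
    fun hidem => ?_⟩
  · rw [hbm q, hbm s, hmL q s hqs]
    exact hqs.actW_right _
  · exact hqs.coe_subset_coe_actW (hbm s ▸ hgrow s)
  · exact (hqs.actW_eq_self (hbm s ▸ hfix s hs)).symm
  · by_cases hq : IsHElement V q
    · exact hfix q hq
    · exact absurd (eqH_of_leL_of_eqR (hdown q hq).1.1 hR) (hdown q hq).2
  · ext s
    refine ⟨?_, fun hs => ⟨s, hfix s hs⟩⟩
    rintro ⟨q, rfl⟩
    by_contra hq
    exact (hdown (b q) hq).2 (by rw [hidem q]; exact eqH_refl _)
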